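/- Let v ∈ V' ≤ V, let A be uniform in L(V/V', W') (i.e., uniform among maps vanishing on V' with image in W'), and let B = w⊗φ ∼ B_v independently. Condition on V'' = ker(φ|_{V'}) and W'' = W' + span{w}. If W'' = W', then A + B is uniformly distributed in L(V/V'', W''); if W'' ≠ W', then A + B is uniformly distributed among maps in L(V/V'', W'') sending v outside W'. -/

import Mathlib

/-!
Write `B = ψ ⊗ w`. Since `A` kills `v` and `ψ v = 1`, the sum `C = A + ψ ⊗ w` determines
`w = C v` and `A = C - ψ ⊗ C v`, so the fiber over `C` is parametrised by the functionals `ψ`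
with `ψ v = 1`, `ψ (V'') = 0` and `range (C - ψ ⊗ C v) ≤ W'`. If `W'' = W'` the last condition
is automatic, so all fibers have the same size. If `W'' ≠ W'`, then `C v ∉ W'` and
`W'' = W' ⊕ F ∙ C v`, and the last condition forces `ψ` to be the `C v`-coordinate of `C`:
every fiber is a single point.
-/

open LinearMap

theorem Set.MapsTo.natCard_fiber_mul_natCard_eq {α β : Type*} [Finite α] [Finite β] {f : α → β}
    {s : Set α} {t : Set β} (hf : Set.MapsTo f s t) {n : ℕ}
    (hn : s.Nonempty → ∀ c ∈ t, Nat.card {x // x ∈ s ∧ f x = c} = n) {c : β} (hc : c ∈ t) :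
    Nat.card {x // x ∈ s ∧ f x = c} * Nat.card t = Nat.card s := by
  rcases s.eq_empty_or_nonempty with rfl | hs
  · simp
  have : Fintype t := Fintype.ofFinite t
  have hfiber (c : t) : Nat.card {x : s // hf.restrict _ _ _ x = c} = n := by
    rw [← hn hs c c.2, Nat.card_congr ((Equiv.subtypeEquivRight fun _ => Subtype.ext_iff).trans
      (Equiv.subtypeSubtypeEquivSubtypeInter (· ∈ s) (f · = c)))]
  rw [hn hs c hc, ← Nat.card_congr (Equiv.sigmaFiberEquiv (hf.restrict _ _ _)), Nat.card_sigma,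
    Finset.sum_congr rfl fun c _ => hfiber c, Finset.sum_const, Finset.card_univ, smul_eq_mul,
    Nat.card_eq_fintype_card, mul_comm]

section

variable {F V W : Type*} [Field F] [AddCommGroup V] [Module F V] [AddCommGroup W] [Module F W]

namespace Submodule

theorem smul_mem_iff_eq_zero {W' : Submodule F W} {y : W} (hy : y ∉ W') {c : F} :
    c • y ∈ W' ↔ c = 0 :=
  ⟨fun h => by_contra fun hc => hy ((smul_mem_iff _ hc).mp h),
    fun h => h ▸ zero_smul F y ▸ W'.zero_mem⟩

theorem exists_dual_eq_one_of_notMem {W' : Submodule F W} {y : W} (hy : y ∉ W') :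
    ∃ μ : Module.Dual F W, μ y = 1 ∧ W' ≤ ker μ := by
  obtain ⟨μ, hμy, hμ⟩ := W'.exists_dual_map_eq_bot_of_notMem hy inferInstance
  refine ⟨(μ y)⁻¹ • μ, by simp [hμy], fun z hz => ?_⟩
  simp [show μ z = 0 from le_ker_iff_map.mpr hμ hz]

theorem sub_smul_mem_inf_ker {V' : Submodule F V} {v u : V} {ψ : Module.Dual F V} (hv : v ∈ V')
    (hψ : ψ v = 1) (hu : u ∈ V') : u - ψ u • v ∈ V' ⊓ ker ψ :=
  ⟨sub_mem hu (V'.smul_mem _ hv), by simp [hψ]⟩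

theorem le_ker_iff_inf_ker_le {V' : Submodule F V} {v : V} {ψ : Module.Dual F V} (hv : v ∈ V')
    (hψ : ψ v = 1) {f : V →ₗ[F] W} : V' ≤ ker f ↔ V' ⊓ ker ψ ≤ ker f ∧ f v = 0 := by
  refine ⟨fun h => ⟨inf_le_left.trans h, h hv⟩, fun ⟨h, hfv⟩ u hu => ?_⟩
  simpa [hfv] using h (sub_smul_mem_inf_ker hv hψ hu)

theorem inf_ker_eq_iff {V' : Submodule F V} {v : V} {ψ₀ ψ : Module.Dual F V} (hv : v ∈ V')
    (hψ₀ : ψ₀ v = 1) (hψ : ψ v = 1) : V' ⊓ ker ψ = V' ⊓ ker ψ₀ ↔ V' ⊓ ker ψ₀ ≤ ker ψ := by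
  refine ⟨fun h => h ▸ inf_le_right, fun h => le_antisymm (fun u ⟨hu, hψu⟩ => ⟨hu, ?_⟩)
    (le_inf inf_le_left h)⟩
  simpa [hψ, show ψ u = 0 from hψu] using h (sub_smul_mem_inf_ker hv hψ₀ hu)

theorem sup_span_singleton_eq_of_mem_of_notMem {W' : Submodule F W} {w y : W}
    (hy : y ∈ W' ⊔ F ∙ w) (hyW' : y ∉ W') : W' ⊔ F ∙ y = W' ⊔ F ∙ w := by
  have hw : w ∉ W' := fun hw => hyW' (sup_le le_rfl ((span_singleton_le_iff_mem _ _).mpr hw) hy)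
  have hcov : W' ⋖ W' ⊔ F ∙ w := by
    rw [sup_comm]; exact covBy_span_singleton_sup hw
  refine (hcov.wcovBy.le_and_le_iff.mp ⟨le_sup_left, sup_le hcov.le
    ((span_singleton_le_iff_mem _ _).mpr hy)⟩).resolve_left fun h => hyW' ?_
  exact h ▸ mem_sup_right (mem_span_singleton_self y)

end Submodule

open Submodule

namespace LinearMap

theorem apply_eq_of_range_sub_smulRight_le {W' : Submodule F W} {y : W} (hy : y ∉ W')
    {C : V →ₗ[F] W} {ψ : Module.Dual F V} (hψ : range (C - ψ.smulRight y) ≤ W') {u : V} {c : F}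
    (hu : C u - c • y ∈ W') : ψ u = c := by
  have h := W'.sub_mem hu (hψ (mem_range_self _ u))
  rwa [sub_apply, smulRight_apply, sub_sub_sub_cancel_left, ← sub_smul,
    smul_mem_iff_eq_zero hy, sub_eq_zero] at h

theorem existsUnique_range_sub_smulRight_le {W' : Submodule F W} {y : W} (hy : y ∉ W')
    {C : V →ₗ[F] W} (hC : range C ≤ W' ⊔ F ∙ y) :
    ∃! ψ : Module.Dual F V, range (C - ψ.smulRight y) ≤ W' := by
  obtain ⟨μ, hμy, hμ⟩ := exists_dual_eq_one_of_notMem hy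
  refine existsUnique_of_exists_of_unique ⟨μ ∘ₗ C, ?_⟩ fun ψ₁ ψ₂ h₁ h₂ => ?_
  · rintro _ ⟨u, rfl⟩
    obtain ⟨p, hp, q, hq, hpq⟩ := mem_sup.mp (hC (mem_range_self C u))
    obtain ⟨c, rfl⟩ := mem_span_singleton.mp hq
    have hμu : μ (C u) = c := by simp [← hpq, show μ p = 0 from hμ hp, hμy]
    rwa [sub_apply, smulRight_apply, comp_apply, hμu, ← hpq, add_sub_cancel_right]
  · ext u
    refine apply_eq_of_range_sub_smulRight_le hy h₁ ?_
    simpa using h₂ (mem_range_self _ u)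

end LinearMap

/-- The support of `(A, ψ, w)` conditioned on `V''` and `W''`. The joint law being uniform,
uniformity of `A + B` amounts to all fibers of `addSmulRight` over the target having one size. -/
def conditionedTriples (V' V'' : Submodule F V) (W' W'' : Submodule F W) (v : V) :
    Set ((V →ₗ[F] W) × Module.Dual F V × W) :=
  {x | (V' ≤ ker x.1 ∧ range x.1 ≤ W') ∧ x.2.1 v = 1 ∧
    V' ⊓ ker x.2.1 = V'' ∧ W' ⊔ (F ∙ x.2.2) = W''}

def addSmulRight (x : (V →ₗ[F] W) × Module.Dual F V × W) : V →ₗ[F] W :=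
  x.1 + x.2.1.smulRight x.2.2

variable {V' V'' : Submodule F V} {W' W'' : Submodule F W} {v : V}

theorem addSmulRight_apply_of_mem (hv : v ∈ V') {x : (V →ₗ[F] W) × Module.Dual F V × W}
    (hx : x ∈ conditionedTriples V' V'' W' W'' v) : addSmulRight x v = x.2.2 := by
  simp [addSmulRight, mem_ker.mp (hx.1.1 hv), hx.2.1]

theorem mapsTo_addSmulRight :
    Set.MapsTo addSmulRight (conditionedTriples V' V'' W' W'' v)
      {C | V'' ≤ ker C ∧ range C ≤ W''} := by
  rintro ⟨A, ψ, w⟩ ⟨⟨hA, hAW'⟩, -, rfl, rfl⟩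
  refine ⟨fun z ⟨hz, hψz⟩ => ?_, ?_⟩
  · simp [addSmulRight, mem_ker.mp (hA hz), show ψ z = 0 from hψz]
  · rintro _ ⟨u, rfl⟩
    exact add_mem (mem_sup_left (hAW' (mem_range_self A u)))
      (mem_sup_right (smul_mem _ _ (mem_span_singleton_self w)))

theorem natCard_fiber_addSmulRight (hv : v ∈ V') {ψ₀ : Module.Dual F V} (hψ₀ : ψ₀ v = 1)
    (hV'' : V' ⊓ ker ψ₀ = V'') {C : V →ₗ[F] W} (hC : V'' ≤ ker C) (hCW : W' ⊔ F ∙ C v = W'') :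
    Nat.card {x // x ∈ conditionedTriples V' V'' W' W'' v ∧ addSmulRight x = C} =
      Nat.card {ψ : Module.Dual F V // ψ v = 1 ∧ V'' ≤ ker ψ ∧
        range (C - ψ.smulRight (C v)) ≤ W'} := by
  subst hV''
  let lift (ψ : Module.Dual F V) : (V →ₗ[F] W) × Module.Dual F V × W :=
    (C - ψ.smulRight (C v), ψ, C v)
  have hfiber : {x | x ∈ conditionedTriples V' (V' ⊓ ker ψ₀) W' W'' v ∧ addSmulRight x = C} =
      lift '' {ψ | ψ v = 1 ∧ V' ⊓ ker ψ₀ ≤ ker ψ ∧ range (C - ψ.smulRight (C v)) ≤ W'} := by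
    ext x
    constructor
    · rintro ⟨hx, rfl⟩
      have hw := addSmulRight_apply_of_mem hv hx
      have hA : addSmulRight x - x.2.1.smulRight (addSmulRight x v) = x.1 := by
        rw [hw, addSmulRight, add_sub_cancel_right]
      exact ⟨x.2.1, ⟨hx.2.1, hx.2.2.1 ▸ inf_le_right, hA ▸ hx.1.2⟩,
        Prod.ext hA (Prod.ext rfl hw)⟩
    · rintro ⟨ψ, ⟨hψv, hψ, hψW'⟩, rfl⟩
      refine ⟨⟨⟨(le_ker_iff_inf_ker_le hv hψ₀).mpr ⟨fun z hz => ?_, ?_⟩, hψW'⟩, hψv,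
        (inf_ker_eq_iff hv hψ₀ hψv).mpr hψ, hCW⟩, sub_add_cancel _ _⟩
      · simp [lift, mem_ker.mp (hC hz), mem_ker.mp (hψ hz)]
      · simp [lift, hψv]
  rw [← Set.coe_ofPred, hfiber, Nat.card_image_of_injective]
  · rfl
  · exact fun ψ₁ ψ₂ h => congrArg (·.2.1) h

theorem mapsTo_addSmulRight_of_ne (hv : v ∈ V') (hW : W'' ≠ W') :
    Set.MapsTo addSmulRight (conditionedTriples V' V'' W' W'' v)
      {C | V'' ≤ ker C ∧ range C ≤ W'' ∧ C v ∉ W'} := fun _ hx =>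
  ⟨(mapsTo_addSmulRight hx).1, (mapsTo_addSmulRight hx).2, addSmulRight_apply_of_mem hv hx ▸
    fun hw => hW (hx.2.2.2 ▸ sup_eq_left.mpr ((span_singleton_le_iff_mem _ _).mpr hw))⟩

theorem natCard_fiber_addSmulRight_of_eq (hv : v ∈ V')
    {x₀ : (V →ₗ[F] W) × Module.Dual F V × W} (hx₀ : x₀ ∈ conditionedTriples V' V'' W' W'' v)
    (hW : W'' = W') {C : V →ₗ[F] W} (hC : V'' ≤ ker C ∧ range C ≤ W'') :
    Nat.card {x // x ∈ conditionedTriples V' V'' W' W'' v ∧ addSmulRight x = C} =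
      Nat.card {ψ : Module.Dual F V // ψ v = 1 ∧ V'' ≤ ker ψ} := by
  subst hW
  have hCv : C v ∈ W'' := hC.2 (mem_range_self C v)
  rw [natCard_fiber_addSmulRight hv hx₀.2.1 hx₀.2.2.1 hC.1
    (sup_eq_left.mpr ((span_singleton_le_iff_mem _ _).mpr hCv))]
  refine Nat.card_congr (Equiv.subtypeEquivRight fun ψ => and_congr_right' (and_iff_left ?_))
  rintro _ ⟨u, rfl⟩
  exact sub_mem (hC.2 (mem_range_self C u)) (smul_mem _ _ hCv)

theorem natCard_fiber_addSmulRight_of_ne (hv : v ∈ V')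
    {x₀ : (V →ₗ[F] W) × Module.Dual F V × W} (hx₀ : x₀ ∈ conditionedTriples V' V'' W' W'' v)
    {C : V →ₗ[F] W} (hC : V'' ≤ ker C ∧ range C ≤ W'' ∧ C v ∉ W') :
    Nat.card {x // x ∈ conditionedTriples V' V'' W' W'' v ∧ addSmulRight x = C} = 1 := by
  obtain ⟨hCV'', hCW'', hCv⟩ := hC
  obtain ⟨-, hψ₀, hV'', hW''⟩ := hx₀
  subst hW''
  have hCW : W' ⊔ F ∙ C v = W' ⊔ F ∙ x₀.2.2 :=
    sup_span_singleton_eq_of_mem_of_notMem (hCW'' (mem_range_self C v)) hCv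
  rw [natCard_fiber_addSmulRight hv hψ₀ hV'' hCV'' hCW, Nat.card_eq_one_iff_unique]
  obtain ⟨ψ, hψ, huniq⟩ := existsUnique_range_sub_smulRight_le hCv (hCW ▸ hCW'')
  refine ⟨⟨fun ψ₁ ψ₂ => Subtype.ext ((huniq _ ψ₁.2.2.2).trans (huniq _ ψ₂.2.2.2).symm)⟩,
    ⟨ψ, apply_eq_of_range_sub_smulRight_le hCv hψ (by simp), fun z hz => ?_, hψ⟩⟩
  exact apply_eq_of_range_sub_smulRight_le hCv hψ (by simp [mem_ker.mp (hCV'' hz)])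

end

/-- Let `v ∈ V' ≤ V`, `W' ≤ W`, let `A` be uniform in `L(V/V',W')` (maps vanishing on
`V'` with image in `W'`) and `B = ψ ⊗ w ∼ B_v` independent (`w` uniform in `W`, `ψ`
uniform among functionals with `ψ(v) = 1`).  Conditioned on `V'' = ker(ψ|_{V'})` and
`W'' = W' + span{w}`:  if `W'' = W'` then `A + B` is uniform in `L(V/V'',W'')`, and if
`W'' ≠ W'` it is uniform among the maps in `L(V/V'',W'')` sending `v` outside `W'`.
Uniformity is expressed by: every element of the target set has a fiber of the same
cardinality, and the image lies in the target set. -/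
theorem stmt_9 (F V W : Type) [Field F] [Fintype F]
    [AddCommGroup V] [Module F V] [Fintype V]
    [AddCommGroup W] [Module F W] [Fintype W]
    (V' V'' : Submodule F V) (W' W'' : Submodule F W) (v : V) (hv : v ∈ V') :
    letI Ω : Set ((V →ₗ[F] W) × Module.Dual F V × W) :=
      {x | (V' ≤ LinearMap.ker x.1 ∧ LinearMap.range x.1 ≤ W') ∧ x.2.1 v = 1 ∧
        V' ⊓ LinearMap.ker x.2.1 = V'' ∧ W' ⊔ (F ∙ x.2.2) = W''}
    letI π : (V →ₗ[F] W) × Module.Dual F V × W → (V →ₗ[F] W) :=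
      fun x => x.1 + x.2.1.smulRight x.2.2
    (W'' = W' →
      letI Tgt : Set (V →ₗ[F] W) :=
        {C | V'' ≤ LinearMap.ker C ∧ LinearMap.range C ≤ W''}
      (∀ x ∈ Ω, π x ∈ Tgt) ∧
        ∀ C ∈ Tgt,
          Nat.card {x : (V →ₗ[F] W) × Module.Dual F V × W // x ∈ Ω ∧ π x = C} *
              Nat.card Tgt = Nat.card Ω) ∧
    (W'' ≠ W' →
      letI Tgt : Set (V →ₗ[F] W) :=
        {C | V'' ≤ LinearMap.ker C ∧ LinearMap.range C ≤ W'' ∧ C v ∉ W'}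
      (∀ x ∈ Ω, π x ∈ Tgt) ∧
        ∀ C ∈ Tgt,
          Nat.card {x : (V →ₗ[F] W) × Module.Dual F V × W // x ∈ Ω ∧ π x = C} *
              Nat.card Tgt = Nat.card Ω) := by
  have : Finite (V →ₗ[F] W) := .of_injective _ DFunLike.coe_injective
  have : Finite (Module.Dual F V) := .of_injective _ DFunLike.coe_injective
  refine ⟨fun hW => ⟨mapsTo_addSmulRight, fun C hC => ?_⟩,
    fun hW => ⟨mapsTo_addSmulRight_of_ne hv hW, fun C hC => ?_⟩⟩
  · exact mapsTo_addSmulRight.natCard_fiber_mul_natCard_eq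
      (fun ⟨_, hx₀⟩ _ hC => natCard_fiber_addSmulRight_of_eq hv hx₀ hW hC) hC
  · exact (mapsTo_addSmulRight_of_ne hv hW).natCard_fiber_mul_natCard_eq
      (fun ⟨_, hx₀⟩ _ hC => natCard_fiber_addSmulRight_of_ne hv hx₀ hC) hC
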